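/- arXiv:1609.06035 — 5 statements merged into one kernel-verified Lean document; each statement's English description precedes it below -/
import Mathlib

section
/- A random variable p uniformly distributed on the discrete grid {1/m, 2/m, ..., m/m} is mirror-conservative: for all 0 < a₁ ≤ a₂ ≤ 1/2, P(p ∈ [a₁,a₂]) ≤ P(p ∈ [1-a₂, 1-a₁]). -/
open MeasureTheory Finset
open scoped ENNReal

/-! The reflection `y ↦ 1 - y` maps the grid points of `[a₁, a₂] ⊆ (0, 1/2]` injectively to grid
points of `[1 - a₂, 1 - a₁]`, and under the uniform law every grid point has the same mass. -/

theorem measure_preimage_eq_card_filter_mul {Ω β : Type*} [MeasurableSpace Ω] {μ : Measure Ω}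
    {p : Ω → β} {S : Finset β} {c : ℝ≥0∞} (hS : ∀ ω, p ω ∈ S)
    (hmeas : ∀ y ∈ S, MeasurableSet (p ⁻¹' {y})) (hfiber : ∀ y ∈ S, μ (p ⁻¹' {y}) = c)
    (A : Set β) [DecidablePred (· ∈ A)] :
    μ (p ⁻¹' A) = #{y ∈ S | y ∈ A} * c := by
  have hA : p ⁻¹' A = p ⁻¹' ↑{y ∈ S | y ∈ A} := by
    ext ω
    simp [hS ω]
  rw [hA, ← sum_measure_preimage_singleton _ fun y hy ↦ hmeas y (mem_filter.1 hy).1,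
    sum_congr rfl fun y hy ↦ hfiber y (mem_filter.1 hy).1, sum_const, nsmul_eq_mul]

theorem card_filter_Icc_le_card_filter_Icc_one_sub {S : Finset ℝ}
    (hS : ∀ y ∈ S, y ≤ 1 / 2 → 1 - y ∈ S) {a₁ a₂ : ℝ} (ha₂ : a₂ ≤ 1 / 2) :
    #{y ∈ S | y ∈ Set.Icc a₁ a₂} ≤ #{y ∈ S | y ∈ Set.Icc (1 - a₂) (1 - a₁)} := by
  refine card_le_card_of_injOn (1 - ·) (fun y hy ↦ ?_) (sub_right_injective.injOn)
  obtain ⟨hyS, hy₁, hy₂⟩ := mem_filter.1 hy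
  exact mem_filter.2 ⟨hS y hyS (hy₂.trans ha₂), by linarith, by linarith⟩

noncomputable def gridPoints (m : ℕ) : Finset ℝ :=
  (Icc 1 m).image fun k : ℕ ↦ (k : ℝ) / m

theorem one_sub_mem_gridPoints {m : ℕ} {y : ℝ} (hy : y ∈ gridPoints m) (hy_le : y ≤ 1 / 2) :
    1 - y ∈ gridPoints m := by
  obtain ⟨k, hk, rfl⟩ := mem_image.1 hy
  obtain ⟨hk₁, hkm⟩ := mem_Icc.1 hk
  have hm : (0 : ℝ) < m := by exact_mod_cast hk₁.trans hkm
  have h2k : 2 * k ≤ m := by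
    rw [div_le_iff₀ hm] at hy_le
    exact_mod_cast (by linarith : (2 * k : ℝ) ≤ m)
  refine mem_image.2 ⟨m - k, mem_Icc.2 ⟨by omega, by omega⟩, ?_⟩
  rw [Nat.cast_sub hkm, sub_div, div_self hm.ne']

theorem discrete_uniform_mirror_conservative_general
    {Ω : Type*} [MeasurableSpace Ω] (μ : Measure Ω)
    (m : ℕ)
    (p : Ω → ℝ) (hp : Measurable p)
    (hunif : ∀ k ∈ Finset.Icc 1 m, μ {ω | p ω = (k : ℝ) / m} = (m : ENNReal)⁻¹)
    (hrange : ∀ ω, ∃ k ∈ Finset.Icc 1 m, p ω = (k : ℝ) / m) :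
    ∀ a₁ a₂ : ℝ, 0 < a₁ → a₁ ≤ a₂ → a₂ ≤ 1 / 2 →
      μ {ω | p ω ∈ Set.Icc a₁ a₂} ≤ μ {ω | p ω ∈ Set.Icc (1 - a₂) (1 - a₁)} := by
  intro a₁ a₂ _ _ ha₂
  classical
  have hS : ∀ ω, p ω ∈ gridPoints m := fun ω ↦ by
    obtain ⟨k, hk, hpk⟩ := hrange ω
    exact mem_image.2 ⟨k, hk, hpk.symm⟩
  have hfiber : ∀ y ∈ gridPoints m, μ (p ⁻¹' {y}) = (m : ℝ≥0∞)⁻¹ := fun y hy ↦ by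
    obtain ⟨k, hk, rfl⟩ := mem_image.1 hy
    exact hunif k hk
  have hmass := measure_preimage_eq_card_filter_mul hS
    (fun y _ ↦ hp (measurableSet_singleton y)) hfiber
  change μ (p ⁻¹' Set.Icc a₁ a₂) ≤ μ (p ⁻¹' Set.Icc (1 - a₂) (1 - a₁))
  rw [hmass, hmass]
  gcongr ?_ * _
  exact_mod_cast card_filter_Icc_le_card_filter_Icc_one_sub (fun y hy ↦ one_sub_mem_gridPoints hy) ha₂

/-- A random variable uniformly distributed on the grid `{1/m, ..., m/m}` is
mirror-conservative. -/
theorem discrete_uniform_mirror_conservative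
    {Ω : Type*} [MeasurableSpace Ω] (μ : Measure Ω) [IsProbabilityMeasure μ]
    (m : ℕ) (hm : 0 < m)
    (p : Ω → ℝ) (hp : Measurable p)
    (hunif : ∀ k ∈ Finset.Icc 1 m, μ {ω | p ω = (k : ℝ) / m} = (m : ENNReal)⁻¹)
    (hrange : ∀ ω, ∃ k ∈ Finset.Icc 1 m, p ω = (k : ℝ) / m) :
    ∀ a₁ a₂ : ℝ, 0 < a₁ → a₁ ≤ a₂ → a₂ ≤ 1 / 2 →
      μ {ω | p ω ∈ Set.Icc a₁ a₂} ≤ μ {ω | p ω ∈ Set.Icc (1 - a₂) (1 - a₁)} :=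
  discrete_uniform_mirror_conservative_general μ m p hp hunif hrange
end

section
/- If a [0,1]-valued random variable p has a density f (with respect to Lebesgue measure) that is non-decreasing on [0,1], then p is mirror-conservative: for all 0 ≤ a₁ ≤ a₂ ≤ 0.5, P(p ∈ [a₁,a₂]) ≤ P(p ∈ [1-a₂,1-a₁]). -/
open MeasureTheory

/-- If a `[0,1]`-valued random variable has a density (w.r.t. Lebesgue measure)
that is non-decreasing on `[0,1]`, then it is mirror-conservative. -/
theorem monotone_density_mirror_conservative
    {Ω : Type*} [MeasurableSpace Ω] (μ : Measure Ω) [IsProbabilityMeasure μ]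
    (p : Ω → ℝ) (hp : Measurable p)
    (hrange : ∀ ω, p ω ∈ Set.Icc (0 : ℝ) 1)
    (f : ℝ → ℝ) (hf0 : ∀ x, 0 ≤ f x) (hfm : Measurable f)
    (hmono : MonotoneOn f (Set.Icc (0 : ℝ) 1))
    (hdens : Measure.map p μ
      = (volume.restrict (Set.Icc (0 : ℝ) 1)).withDensity
          (fun x => ENNReal.ofReal (f x))) :
    ∀ a₁ a₂ : ℝ, 0 ≤ a₁ → a₁ ≤ a₂ → a₂ ≤ 0.5 →
      μ {ω | p ω ∈ Set.Icc a₁ a₂} ≤ μ {ω | p ω ∈ Set.Icc (1 - a₂) (1 - a₁)} := by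
  intro a₁ a₂ h0 h12 h25
  have ha2 : a₂ ≤ 1 := by linarith [h25]
  have hsum : a₁ + a₂ ≤ 1 := by norm_num at h25; linarith
  set c : ℝ := 1 - a₁ - a₂ with hc
  have hc0 : 0 ≤ c := by simp [hc]; linarith
  have key : ∀ s : Set ℝ, MeasurableSet s → s ⊆ Set.Icc (0:ℝ) 1 →
      μ {ω | p ω ∈ s} = ∫⁻ x in s, ENNReal.ofReal (f x) := by
    intro s hs hsub
    have : {ω | p ω ∈ s} = p ⁻¹' s := rfl
    rw [this, ← Measure.map_apply hp hs, hdens,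
      withDensity_apply _ hs, Measure.restrict_restrict hs,
      Set.inter_eq_left.mpr hsub]
  rw [key _ measurableSet_Icc (Set.Icc_subset_Icc h0 ha2),
    key _ measurableSet_Icc (Set.Icc_subset_Icc (by linarith) (by linarith))]
  have hmp : MeasurePreserving (fun x : ℝ => x + c) volume volume :=
    measurePreserving_add_right volume c
  have hemb : MeasurableEmbedding (fun x : ℝ => x + c) :=
    measurableEmbedding_addRight c
  have hpre : (fun x : ℝ => x + c) ⁻¹' Set.Icc (1 - a₂) (1 - a₁) = Set.Icc a₁ a₂ := by
    ext x
    simp only [Set.mem_preimage, Set.mem_Icc, hc]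
    constructor <;> intro h <;> constructor <;> linarith [h.1, h.2]
  have := hmp.setLIntegral_comp_preimage_emb hemb (fun x => ENNReal.ofReal (f x))
      (Set.Icc (1 - a₂) (1 - a₁))
  rw [hpre] at this
  rw [← this]
  refine setLIntegral_mono (hfm.ennreal_ofReal.comp (measurable_add_const c)) ?_
  intro x hx
  rcases hx with ⟨hx1, hx2⟩
  refine ENNReal.ofReal_le_ofReal ?_
  exact hmono ⟨by linarith, by linarith⟩ ⟨by linarith, by linarith⟩ (by linarith)
end

section
/- Mirror-conservatism does not imply conservatism: the random variable p that equals 1 with probability 0.9 and 0 with probability 0.1 is mirror-conservative but not conservative, i.e., there exists a ∈ [0,1] with P(p ≤ a) > a. -/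
open MeasureTheory Set

section

variable {Ω : Type*} [MeasurableSpace Ω]

def IsConservative (μ : Measure Ω) (p : Ω → ℝ) : Prop :=
  ∀ a ∈ Icc (0 : ℝ) 1, μ {ω | p ω ≤ a} ≤ ENNReal.ofReal a

def IsMirrorConservative (μ : Measure Ω) (p : Ω → ℝ) : Prop :=
  ∀ a₁ a₂ : ℝ, 0 ≤ a₁ → a₁ ≤ a₂ → a₂ ≤ 0.5 →
    μ {ω | p ω ∈ Icc a₁ a₂} ≤ μ {ω | p ω ∈ Icc (1 - a₂) (1 - a₁)}

theorem IsConservative.measure_eq_zero {μ : Measure Ω} {p : Ω → ℝ}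
    (hp : IsConservative μ p) : μ {ω | p ω = 0} = 0 := by
  refine le_antisymm ?_ zero_le
  calc μ {ω | p ω = 0} ≤ μ {ω | p ω ≤ 0} := measure_mono fun ω hω => le_of_eq hω
    _ ≤ ENNReal.ofReal 0 := hp 0 ⟨le_rfl, zero_le_one⟩
    _ = 0 := ENNReal.ofReal_zero

/-- A `{0, 1}`-valued `p` only meets `[a₁, a₂] ⊆ [0, 1/2]` at `0`, and `0 ∈ [a₁, a₂]` exactly when
`1 ∈ [1 - a₂, 1 - a₁]`. -/
theorem isMirrorConservative_of_forall_eq_zero_or_eq_one {μ : Measure Ω} {p : Ω → ℝ}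
    (hval : ∀ ω, p ω = 0 ∨ p ω = 1) (hμ : μ {ω | p ω = 0} ≤ μ {ω | p ω = 1}) :
    IsMirrorConservative μ p := by
  intro a₁ a₂ _ _ ha₂
  by_cases h0 : (0 : ℝ) ∈ Icc a₁ a₂
  · have hleft : {ω | p ω ∈ Icc a₁ a₂} ⊆ {ω | p ω = 0} := fun ω hω =>
      (hval ω).resolve_right fun h1 => by
        have : (1 : ℝ) ≤ a₂ := h1 ▸ hω.2
        norm_num at ha₂
        linarith
    have hright : {ω | p ω = 1} ⊆ {ω | p ω ∈ Icc (1 - a₂) (1 - a₁)} := fun ω hω =>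
      (show p ω = 1 from hω) ▸ ⟨by linarith [h0.2], by linarith [h0.1]⟩
    exact (measure_mono hleft).trans (hμ.trans (measure_mono hright))
  · have hleft : {ω | p ω ∈ Icc a₁ a₂} = ∅ := by
      refine eq_empty_of_forall_notMem fun ω hω => ?_
      rcases hval ω with h | h
      · exact h0 (h ▸ hω)
      · have : (1 : ℝ) ≤ a₂ := h ▸ hω.2
        norm_num at ha₂
        linarith
    rw [hleft, measure_empty]
    exact zero_le

end

theorem mirror_conservative_not_conservative_general
    {Ω : Type*} [MeasurableSpace Ω] (μ : Measure Ω)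
    (p : Ω → ℝ)
    (hval : ∀ ω, p ω = 0 ∨ p ω = 1)
    (h1 : μ {ω | p ω = 1} = ENNReal.ofReal 0.9)
    (h0 : μ {ω | p ω = 0} = ENNReal.ofReal 0.1) :
    (∀ a₁ a₂ : ℝ, 0 ≤ a₁ → a₁ ≤ a₂ → a₂ ≤ 0.5 →
      μ {ω | p ω ∈ Set.Icc a₁ a₂} ≤ μ {ω | p ω ∈ Set.Icc (1 - a₂) (1 - a₁)}) ∧
    (∃ a ∈ Set.Icc (0 : ℝ) 1, ENNReal.ofReal a < μ {ω | p ω ≤ a}) := by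
  have hmirror : IsMirrorConservative μ p :=
    isMirrorConservative_of_forall_eq_zero_or_eq_one hval
      (by rw [h0, h1]; exact ENNReal.ofReal_le_ofReal (by norm_num))
  have hnot : ¬IsConservative μ p := fun hp => by
    have := hp.measure_eq_zero
    rw [h0, ENNReal.ofReal_eq_zero] at this
    norm_num at this
  simp only [IsConservative, not_forall, not_le, exists_prop] at hnot
  exact ⟨hmirror, hnot⟩

/-- Mirror-conservatism does not imply conservatism: `p = 1` w.p. `0.9` and
`p = 0` w.p. `0.1` is mirror-conservative but not conservative. -/
theorem mirror_conservative_not_conservative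
    {Ω : Type*} [MeasurableSpace Ω] (μ : Measure Ω) [IsProbabilityMeasure μ]
    (p : Ω → ℝ) (hp : Measurable p)
    (hval : ∀ ω, p ω = 0 ∨ p ω = 1)
    (h1 : μ {ω | p ω = 1} = ENNReal.ofReal 0.9)
    (h0 : μ {ω | p ω = 0} = ENNReal.ofReal 0.1) :
    (∀ a₁ a₂ : ℝ, 0 ≤ a₁ → a₁ ≤ a₂ → a₂ ≤ 0.5 →
      μ {ω | p ω ∈ Set.Icc a₁ a₂} ≤ μ {ω | p ω ∈ Set.Icc (1 - a₂) (1 - a₁)}) ∧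
    (∃ a ∈ Set.Icc (0 : ℝ) 1, ENNReal.ofReal a < μ {ω | p ω ≤ a}) :=
  mirror_conservative_not_conservative_general μ p hval h1 h0
end

section
/- Conservatism does not imply mirror-conservatism: if p = 0.1 + 0.9·B where B ~ Bernoulli(0.9), then P(p ≤ a) ≤ a for all a ∈ [0,1], but there exist 0 ≤ a₁ ≤ a₂ ≤ 0.5 with P(p ∈ [a₁,a₂]) > P(p ∈ [1-a₂,1-a₁]). -/
open MeasureTheory

/-- Conservatism does not imply mirror-conservatism: `p = 1` w.p. `0.9` and
`p = 0.1` w.p. `0.1` is conservative but not mirror-conservative. -/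
theorem conservative_not_mirror_conservative
    {Ω : Type*} [MeasurableSpace Ω] (μ : Measure Ω) [IsProbabilityMeasure μ]
    (p : Ω → ℝ) (hp : Measurable p)
    (hval : ∀ ω, p ω = 0.1 ∨ p ω = 1)
    (h1 : μ {ω | p ω = 1} = ENNReal.ofReal 0.9)
    (h0 : μ {ω | p ω = 0.1} = ENNReal.ofReal 0.1) :
    (∀ a ∈ Set.Icc (0 : ℝ) 1, μ {ω | p ω ≤ a} ≤ ENNReal.ofReal a) ∧
    (∃ a₁ a₂ : ℝ, 0 ≤ a₁ ∧ a₁ ≤ a₂ ∧ a₂ ≤ 0.5 ∧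
      μ {ω | p ω ∈ Set.Icc (1 - a₂) (1 - a₁)} < μ {ω | p ω ∈ Set.Icc a₁ a₂}) := by
  constructor
  · intro a ha
    by_cases hlt : a < 0.1
    · have : {ω | p ω ≤ a} = (∅ : Set Ω) := by
        ext ω
        simp only [Set.mem_setOf_eq, Set.mem_empty_iff_false, iff_false, not_le]
        rcases hval ω with h | h <;> rw [h] <;> [exact hlt; linarith]
      rw [this]
      simp
    · push_neg at hlt
      by_cases h1' : 1 ≤ a
      · calc μ {ω | p ω ≤ a} ≤ 1 := prob_le_one
        _ = ENNReal.ofReal 1 := by simp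
        _ ≤ ENNReal.ofReal a := ENNReal.ofReal_le_ofReal h1'
      · push_neg at h1'
        have hsub : {ω | p ω ≤ a} ⊆ {ω | p ω = 0.1} := by
          intro ω hω
          rcases hval ω with h | h
          · exact h
          · exfalso; simp only [Set.mem_setOf_eq, h] at hω; linarith
        calc μ {ω | p ω ≤ a} ≤ μ {ω | p ω = 0.1} := measure_mono hsub
        _ = ENNReal.ofReal 0.1 := h0
        _ ≤ ENNReal.ofReal a := ENNReal.ofReal_le_ofReal hlt
  · refine ⟨0.1, 0.1, by norm_num, le_refl _, by norm_num, ?_⟩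
    have he : {ω | p ω ∈ Set.Icc (1 - (0.1:ℝ)) (1 - 0.1)} = (∅ : Set Ω) := by
      ext ω
      simp only [Set.mem_setOf_eq, Set.mem_Icc, Set.mem_empty_iff_false, iff_false]
      rcases hval ω with h | h <;> rw [h] <;> norm_num
    have hf : {ω | p ω ∈ Set.Icc (0.1:ℝ) 0.1} = {ω | p ω = 0.1} := by
      ext ω; simp [le_antisymm_iff, and_comm]
    rw [he, hf, h0]
    simp
    norm_num
end

section
/- In the AdaPT procedure, define t_i* = min{t : s_t(x_i) < p_i < 1 − s_t(x_i)} (the step at which p_i is revealed) and t̂_α = min{t : FDP-hat_t ≤ α}. Then hypothesis H_i is rejected at level α (i.e., p_i ≤ s_{t̂_α}(x_i)) if and only if min_{t < t_i*} FDP-hat_t ≤ α. Consequently q_i = min_{t < t_i*} FDP-hat_t is a valid q-value: H_i is rejected at level α if and only if q_i ≤ α. -/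
/-- The AdaPT q-value identity for a fixed hypothesis with p-value `p` and
threshold sequence `s t = s_t(x_i)`: writing `tstar` for the step at which `p`
is revealed and `tα` for the stopping step at level `α`, the hypothesis is
rejected at level `α` iff `min_{t < tstar} FDPhat t ≤ α`. -/
theorem adapt_qvalue
    (s : ℕ → ℝ) (hs_anti : Antitone s) (hs_range : ∀ t, 0 ≤ s t ∧ s t ≤ 0.5)
    (p : ℝ) (FDPhat : ℕ → ℝ) (α : ℝ)
    (tstar : ℕ)
    (htstar : (s tstar < p ∧ p < 1 - s tstar) ∧
      ∀ t < tstar, ¬(s t < p ∧ p < 1 - s t))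
    (tα : ℕ) (htα : FDPhat tα ≤ α ∧ ∀ t < tα, α < FDPhat t)
    (hkey : (∀ t < tstar, p ≤ s t) ∧ ∀ t, tstar ≤ t → s t < p) :
    (p ≤ s tα ↔ ∃ t < tstar, FDPhat t ≤ α) ∧
    (0 < tstar →
      (p ≤ s tα ↔ sInf (FDPhat '' Set.Iio tstar) ≤ α)) := by
  have hiff : p ≤ s tα ↔ ∃ t < tstar, FDPhat t ≤ α := by
    constructor
    · intro hp
      refine ⟨tα, ?_, htα.1⟩
      by_contra h
      exact absurd hp (not_le.mpr (hkey.2 tα (not_lt.mp h)))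
    · rintro ⟨t, htlt, hft⟩
      have htα_le : tα ≤ t := not_lt.mp fun h => absurd hft (not_le.mpr (htα.2 t h))
      exact hkey.1 tα (lt_of_le_of_lt htα_le htlt)
  refine ⟨hiff, fun hpos => hiff.trans ?_⟩
  have hfin : (FDPhat '' Set.Iio tstar).Finite := (Set.finite_Iio tstar).image _
  have hne : (FDPhat '' Set.Iio tstar).Nonempty := ⟨FDPhat 0, 0, hpos, rfl⟩
  constructor
  · rintro ⟨t, htlt, hft⟩
    exact le_trans (csInf_le hfin.bddBelow ⟨t, htlt, rfl⟩) hft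
  · intro h
    obtain ⟨t, htlt, heq⟩ := hne.csInf_mem hfin
    exact ⟨t, htlt, heq ▸ h⟩
end
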